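/- Let u : (0,∞) × ℝ³ → ℝ be C², and suppose |t − r| ≥ 1 and r ≤ 2t, where r = |x|. Then ⟨t−r⟩ |∂_i ∂_t u| ≲ |∂Γ^{≤1}u| + ⟨t+r⟩|□u| for each i = 1,2,3, using the identity ∂_i∂_t u = t^{-1} ∂_t Ω_{i0}u − t^{-1}∂_i u − (x_i/t) ∂_{tt}u together with the bound ⟨t−r⟩|∂_{tt}u| ≲ ⟨t+r⟩|□u| + |∂Γ^{≤1}u|. -/

import Mathlib

open Real MeasureTheory

/-- Partial derivative in the `j`-th space-time coordinate (`0` = time, `1,2,3` = space). -/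
noncomputable def pd (j : Fin 4) (U : (Fin 4 → ℝ) → ℝ) : (Fin 4 → ℝ) → ℝ :=
  fun z => fderiv ℝ U z (Pi.single j 1)

/-- Spatial Laplacian. -/
noncomputable def lap (U : (Fin 4 → ℝ) → ℝ) : (Fin 4 → ℝ) → ℝ :=
  fun z => ∑ i : Fin 3, pd i.succ (pd i.succ U) z

/-- The d'Alembertian `□ = ∂_tt − Δ`. -/
noncomputable def box (U : (Fin 4 → ℝ) → ℝ) : (Fin 4 → ℝ) → ℝ :=
  fun z => pd 0 (pd 0 U) z - lap U z

/-- The spatial radius `r = |x|`. -/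
noncomputable def rad (z : Fin 4 → ℝ) : ℝ := Real.sqrt (∑ i : Fin 3, (z i.succ)^2)

/-- Lorentz boost `Ω_{i0} = t∂_i + x_i ∂_t`. -/
noncomputable def boost (i : Fin 3) (U : (Fin 4 → ℝ) → ℝ) : (Fin 4 → ℝ) → ℝ :=
  fun z => z 0 * pd i.succ U z + z i.succ * pd 0 U z

/-- Rotation `Ω_{ij} = x_i∂_j − x_j∂_i`. -/
noncomputable def rot (i j : Fin 3) (U : (Fin 4 → ℝ) → ℝ) : (Fin 4 → ℝ) → ℝ :=
  fun z => z i.succ * pd j.succ U z - z j.succ * pd i.succ U z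

/-- Radial derivative `∂_r = (x/r)·∇`. -/
noncomputable def dr (U : (Fin 4 → ℝ) → ℝ) : (Fin 4 → ℝ) → ℝ :=
  fun z => ∑ i : Fin 3, (z i.succ / rad z) * pd i.succ U z

/-- Japanese bracket `⟨s⟩ = √(1+s²)`. -/
noncomputable def jb (s : ℝ) : ℝ := Real.sqrt (1 + s^2)

/-- The eleven operators `Γ^{≤1}`: identity, `∂_t`, `∂_i`, boosts, rotations. -/
noncomputable def gam : Fin 11 → ((Fin 4 → ℝ) → ℝ) → ((Fin 4 → ℝ) → ℝ) :=
  ![id, pd 0, pd 1, pd 2, pd 3, boost 0, boost 1, boost 2, rot 0 1, rot 0 2, rot 1 2]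

/-- `|∂Γ^{≤1}u|`: the ℓ² norm of all space-time first derivatives of all `Γ^{≤1}u`. -/
noncomputable def dGam (U : (Fin 4 → ℝ) → ℝ) (z : Fin 4 → ℝ) : ℝ :=
  Real.sqrt (∑ a : Fin 4, ∑ k : Fin 11, (pd a (gam k U) z)^2)

/-!
Everything rests on two algebraic identities between second derivatives of `u` and first
derivatives of the boosts `Ω_{i0}u`. Summing `t ∂_i Ω_{i0}u − x_i ∂_t Ω_{i0}u` over `i` gives
`(t² − r²) ∂_tt u = t² □u + O((t + r) |∂Γ^{≤1}u|)`, and dividing by `t + r` bounds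
`|t − r| |∂_tt u|`. Then `t ∂_i∂_t u = ∂_t Ω_{i0}u − ∂_i u − x_i ∂_tt u`, and `r ≤ 2t` turns
`|x_i| ≤ r` into a factor `2t`, which cancels the `t` on the left.
-/

section SecondDerivatives

variable {U : (Fin 4 → ℝ) → ℝ} {z : Fin 4 → ℝ}

theorem hasFDerivAt_pd (hU : ContDiffAt ℝ 2 U z) (b : Fin 4) :
    HasFDerivAt (pd b U)
      ((ContinuousLinearMap.apply ℝ ℝ (Pi.single b 1 : Fin 4 → ℝ)).comp
        (fderiv ℝ (fderiv ℝ U) z)) z := by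
  have hdiff : DifferentiableAt ℝ (fderiv ℝ U) z :=
    (hU.fderiv_right (m := 1) (by norm_num)).differentiableAt one_ne_zero
  exact (ContinuousLinearMap.apply ℝ ℝ _).hasFDerivAt.comp z hdiff.hasFDerivAt

theorem pd_pd (hU : ContDiffAt ℝ 2 U z) (a b : Fin 4) :
    pd a (pd b U) z = fderiv ℝ (fderiv ℝ U) z (Pi.single a 1) (Pi.single b 1) := by
  rw [pd, (hasFDerivAt_pd hU b).fderiv]
  rfl

theorem pd_comm (hU : ContDiffAt ℝ 2 U z) (a b : Fin 4) :
    pd a (pd b U) z = pd b (pd a U) z := by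
  rw [pd_pd hU a b, pd_pd hU b a]
  exact hU.isSymmSndFDerivAt (by simp [minSmoothness_of_isRCLikeNormedField]) _ _

theorem pd_boost (hU : ContDiffAt ℝ 2 U z) (i : Fin 3) (a : Fin 4) :
    pd a (boost i U) z =
      (Pi.single a 1 : Fin 4 → ℝ) 0 * pd i.succ U z + z 0 * pd a (pd i.succ U) z
      + (Pi.single a 1 : Fin 4 → ℝ) i.succ * pd 0 U z + z i.succ * pd a (pd 0 U) z := by
  have hboost : HasFDerivAt (boost i U) _ z :=
    ((hasFDerivAt_apply 0 z).mul (hasFDerivAt_pd hU i.succ)).add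
      ((hasFDerivAt_apply i.succ z).mul (hasFDerivAt_pd hU 0))
  rw [pd, hboost.fderiv]
  simp only [add_apply, smul_apply, ContinuousLinearMap.comp_apply,
    ContinuousLinearMap.proj_apply, ContinuousLinearMap.apply_apply, smul_eq_mul, pd_pd hU]
  ring

theorem pd_zero_boost (hU : ContDiffAt ℝ 2 U z) (i : Fin 3) :
    pd 0 (boost i U) z =
      pd i.succ U z + z 0 * pd 0 (pd i.succ U) z + z i.succ * pd 0 (pd 0 U) z := by
  rw [pd_boost hU, Pi.single_eq_same, Pi.single_eq_of_ne (Fin.succ_ne_zero i)]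
  ring

theorem pd_succ_boost (hU : ContDiffAt ℝ 2 U z) (i : Fin 3) :
    pd i.succ (boost i U) z =
      pd 0 U z + z 0 * pd i.succ (pd i.succ U) z + z i.succ * pd i.succ (pd 0 U) z := by
  rw [pd_boost hU, Pi.single_eq_same, Pi.single_eq_of_ne (Fin.succ_ne_zero i).symm]
  ring

theorem rad_sq (z : Fin 4 → ℝ) : rad z ^ 2 = ∑ i : Fin 3, z i.succ ^ 2 :=
  Real.sq_sqrt (by positivity)

theorem sq_sub_rad_sq_mul_pd_zero_pd_zero (hU : ContDiffAt ℝ 2 U z) :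
    (z 0 ^ 2 - rad z ^ 2) * pd 0 (pd 0 U) z
      = z 0 ^ 2 * box U z
        + ∑ i : Fin 3, (z 0 * pd i.succ (boost i U) z - z i.succ * pd 0 (boost i U) z
            + z i.succ * pd i.succ U z)
        - 3 * (z 0 * pd 0 U z) := by
  simp only [rad_sq, box, lap, Fin.sum_univ_three, pd_zero_boost hU, pd_succ_boost hU]
  rw [pd_comm hU 0 (Fin.succ 0), pd_comm hU 0 (Fin.succ 1), pd_comm hU 0 (Fin.succ 2)]
  ring

theorem mul_pd_succ_pd_zero (hU : ContDiffAt ℝ 2 U z) (i : Fin 3) :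
    z 0 * pd i.succ (pd 0 U) z
      = pd 0 (boost i U) z - pd i.succ U z - z i.succ * pd 0 (pd 0 U) z := by
  rw [pd_zero_boost hU, pd_comm hU 0 i.succ]
  ring

end SecondDerivatives

section Bounds

theorem abs_pd_gam_le_dGam (U : (Fin 4 → ℝ) → ℝ) (z : Fin 4 → ℝ) (a : Fin 4) (k : Fin 11) :
    |pd a (gam k U) z| ≤ dGam U z :=
  Real.abs_le_sqrt <|
    (Finset.single_le_sum (f := fun k => pd a (gam k U) z ^ 2) (fun _ _ => sq_nonneg _)
      (Finset.mem_univ k)).trans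
      (Finset.single_le_sum (f := fun a => ∑ k, pd a (gam k U) z ^ 2)
        (fun _ _ => Finset.sum_nonneg fun _ _ => sq_nonneg _) (Finset.mem_univ a))

theorem abs_pd_le_dGam (U : (Fin 4 → ℝ) → ℝ) (z : Fin 4 → ℝ) (a : Fin 4) :
    |pd a U z| ≤ dGam U z :=
  abs_pd_gam_le_dGam U z a 0

theorem abs_pd_boost_le_dGam (U : (Fin 4 → ℝ) → ℝ) (z : Fin 4 → ℝ) (a : Fin 4) (i : Fin 3) :
    |pd a (boost i U) z| ≤ dGam U z := by
  fin_cases i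
  exacts [abs_pd_gam_le_dGam U z a 5, abs_pd_gam_le_dGam U z a 6, abs_pd_gam_le_dGam U z a 7]

theorem abs_le_rad (z : Fin 4 → ℝ) (i : Fin 3) : |z i.succ| ≤ rad z :=
  Real.abs_le_sqrt <|
    Finset.single_le_sum (f := fun i : Fin 3 => z i.succ ^ 2) (fun _ _ => sq_nonneg _)
      (Finset.mem_univ i)

theorem rad_nonneg (z : Fin 4 → ℝ) : 0 ≤ rad z := Real.sqrt_nonneg _

theorem dGam_nonneg (U : (Fin 4 → ℝ) → ℝ) (z : Fin 4 → ℝ) : 0 ≤ dGam U z := Real.sqrt_nonneg _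

theorem jb_nonneg (s : ℝ) : 0 ≤ jb s := Real.sqrt_nonneg _

theorem abs_le_jb (s : ℝ) : |s| ≤ jb s :=
  Real.abs_le_sqrt (by linarith)

theorem jb_le_sqrt_two_mul_abs {s : ℝ} (hs : 1 ≤ |s|) : jb s ≤ √2 * |s| := by
  rw [jb, ← Real.sqrt_sq_eq_abs, ← Real.sqrt_mul zero_le_two]
  exact Real.sqrt_le_sqrt (by nlinarith [sq_abs s])

end Bounds

section Estimates

variable {U : (Fin 4 → ℝ) → ℝ} {z : Fin 4 → ℝ}

theorem abs_sub_rad_mul_abs_pd_zero_pd_zero_le (hU : ContDiffAt ℝ 2 U z) (ht : 0 < z 0) :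
    |z 0 - rad z| * |pd 0 (pd 0 U) z| ≤ z 0 * |box U z| + 6 * dGam U z := by
  set t := z 0
  set r := rad z
  set D := dGam U z
  have hr : 0 ≤ r := rad_nonneg z
  have hterm (i : Fin 3) :
      |t * pd i.succ (boost i U) z - z i.succ * pd 0 (boost i U) z + z i.succ * pd i.succ U z|
        ≤ (t + 2 * r) * D := by
    have h₁ : |t * pd i.succ (boost i U) z| ≤ t * D := by
      rw [abs_mul, abs_of_pos ht]; gcongr; exact abs_pd_boost_le_dGam U z _ i
    have h₂ : |z i.succ * pd 0 (boost i U) z| ≤ r * D := by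
      rw [abs_mul]; gcongr; exacts [abs_le_rad z i, abs_pd_boost_le_dGam U z 0 i]
    have h₃ : |z i.succ * pd i.succ U z| ≤ r * D := by
      rw [abs_mul]; gcongr; exacts [abs_le_rad z i, abs_pd_le_dGam U z _]
    rw [abs_le] at h₁ h₂ h₃ ⊢
    constructor <;> linarith
  have hdt : |3 * (t * pd 0 U z)| ≤ 3 * (t * D) := by
    rw [abs_mul, abs_mul, abs_of_pos ht, abs_of_pos three_pos]
    gcongr; exact abs_pd_le_dGam U z 0
  have hmain : (t + r) * (|t - r| * |pd 0 (pd 0 U) z|) ≤ (t + r) * (t * |box U z| + 6 * D) :=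
    calc (t + r) * (|t - r| * |pd 0 (pd 0 U) z|) = |(t ^ 2 - r ^ 2) * pd 0 (pd 0 U) z| := by
          rw [abs_mul, show t ^ 2 - r ^ 2 = (t - r) * (t + r) by ring, abs_mul,
            abs_of_pos (by positivity : 0 < t + r)]
          ring
      _ ≤ |t ^ 2 * box U z| + 3 * ((t + 2 * r) * D) + 3 * (t * D) := by
          rw [sq_sub_rad_sq_mul_pd_zero_pd_zero hU]
          refine (abs_sub _ _).trans
            (add_le_add ((abs_add_le _ _).trans (add_le_add_right ?_ _)) hdt)
          exact (Finset.abs_sum_le_sum_abs _ _).trans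
            ((Finset.sum_le_card_nsmul _ _ _ fun i _ => hterm i).trans_eq (by simp))
      _ ≤ (t + r) * (t * |box U z| + 6 * D) := by
          rw [abs_mul, abs_of_nonneg (sq_nonneg t)]
          nlinarith [mul_nonneg (mul_nonneg ht.le hr) (abs_nonneg (box U z))]
  exact le_of_mul_le_mul_left hmain (by positivity)

theorem abs_sub_rad_mul_abs_pd_succ_pd_zero_le (hU : ContDiffAt ℝ 2 U z) (ht : 0 < z 0)
    (hr : rad z ≤ 2 * z 0) (i : Fin 3) :
    |z 0 - rad z| * |pd i.succ (pd 0 U) z| ≤ 14 * dGam U z + 2 * z 0 * |box U z| := by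
  set t := z 0
  set r := rad z
  set D := dGam U z
  have hr0 : 0 ≤ r := rad_nonneg z
  have hsub : |t - r| ≤ t := abs_le.mpr ⟨by linarith, by linarith⟩
  have htQ : t * |pd i.succ (pd 0 U) z| ≤ 2 * D + r * |pd 0 (pd 0 U) z| := by
    rw [← abs_of_pos ht, ← abs_mul, mul_pd_succ_pd_zero hU i]
    have h₁ := abs_pd_boost_le_dGam U z 0 i
    have h₂ := abs_pd_le_dGam U z i.succ
    have h₃ : |z i.succ * pd 0 (pd 0 U) z| ≤ r * |pd 0 (pd 0 U) z| := by
      rw [abs_mul]; gcongr; exact abs_le_rad z i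
    rw [abs_le] at h₁ h₂ h₃ ⊢
    constructor <;> linarith
  have hP := abs_sub_rad_mul_abs_pd_zero_pd_zero_le hU ht
  refine le_of_mul_le_mul_left ?_ ht
  calc t * (|t - r| * |pd i.succ (pd 0 U) z|)
      = |t - r| * (t * |pd i.succ (pd 0 U) z|) := by ring
    _ ≤ |t - r| * (2 * D + r * |pd 0 (pd 0 U) z|) := by gcongr
    _ = 2 * (|t - r| * D) + r * (|t - r| * |pd 0 (pd 0 U) z|) := by ring
    _ ≤ 2 * (t * D) + 2 * t * (t * |box U z| + 6 * D) := by
        gcongr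
        exact dGam_nonneg U z
    _ = t * (14 * D + 2 * t * |box U z|) := by ring

end Estimates

/-- **Mixed second-derivative bound, interior case.** For `u` of class `C²` on
`(0,∞) × ℝ³` with `|t − r| ≥ 1` and `r ≤ 2t`:
`⟨t−r⟩|∂_i∂_t u| ≲ |∂Γ^{≤1}u| + ⟨t+r⟩|□u|` for each `i = 1,2,3`, absolute constant. -/
theorem mixed_second_derivative_interior :
    ∃ C > 0, ∀ U : (Fin 4 → ℝ) → ℝ,
      ContDiffOn ℝ 2 U {z : Fin 4 → ℝ | 0 < z 0} →
      ∀ z : Fin 4 → ℝ, 0 < z 0 → 1 ≤ |z 0 - rad z| → rad z ≤ 2 * z 0 →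
        ∀ i : Fin 3,
          jb (z 0 - rad z) * |pd i.succ (pd 0 U) z|
            ≤ C * (dGam U z + jb (z 0 + rad z) * |box U z|) := by
  refine ⟨21, by norm_num, fun U hU z ht hsep hr i => ?_⟩
  have hUz : ContDiffAt ℝ 2 U z :=
    hU.contDiffAt ((isOpen_lt continuous_const (continuous_apply 0)).mem_nhds ht)
  have hjb : z 0 ≤ jb (z 0 + rad z) :=
    (le_add_of_nonneg_right (rad_nonneg z)).trans ((le_abs_self _).trans (abs_le_jb _))
  calc jb (z 0 - rad z) * |pd i.succ (pd 0 U) z|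
      ≤ √2 * (|z 0 - rad z| * |pd i.succ (pd 0 U) z|) := by
        rw [← mul_assoc]; gcongr; exact jb_le_sqrt_two_mul_abs hsep
    _ ≤ 3 / 2 * (14 * dGam U z + 2 * z 0 * |box U z|) := by
        gcongr
        · exact Real.sqrt_two_lt_three_halves.le
        · exact abs_sub_rad_mul_abs_pd_succ_pd_zero_le hUz ht hr i
    _ ≤ 21 * (dGam U z + jb (z 0 + rad z) * |box U z|) := by
        nlinarith [mul_le_mul_of_nonneg_right hjb (abs_nonneg (box U z)),
          mul_nonneg (jb_nonneg (z 0 + rad z)) (abs_nonneg (box U z))]
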